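/- Define the foreign government's best-response subsidy s1*(s2) := [m²/(4(1−b1)(1−b2))] / [1 − 1/(2(1−b2)(1−s2)φ2)]. On the set of s2 ∈ (0,1) with 2(1−b2)(1−s2)φ2 > 1, and for m ≠ 0: (i) s1*(s2) > 0; (ii) s1*(s2) does not depend on the home tax t; (iii) s1* is differentiable in s2 with ds1*/ds2 = [1/(1 − 1/(2(1−b2)(1−s2)φ2))²]·m²/(8(1−b1)(1−b2)²(1−s2)²φ2) > 0, so the function s2 ↦ s1*(s2) is strictly increasing (process-R&D subsidies are strategic complements). -/
import Mathlib
set_option maxHeartbeats 1000000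


/-- The foreign government's best-response process-R&D subsidy
`s1*(s2) = [m²/(4(1−b1)(1−b2))] / [1 − 1/(2(1−b2)(1−s2)φ2)]` (the argument `t` is
carried along to express that the best response does not depend on the home tax). -/
noncomputable def s1star (m b1 b2 t φ2 s2 : ℝ) : ℝ :=
  (m ^ 2 / (4 * (1 - b1) * (1 - b2))) / (1 - 1 / (2 * (1 - b2) * (1 - s2) * φ2))

/-- For `m ≠ 0`, on the set of `s2 ∈ (0,1)` with `2(1−b2)(1−s2)φ2 > 1`:
(i) `s1*(s2) > 0`; (ii) `s1*(s2)` does not depend on the home tax `t`;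
(iii) `s1*` is differentiable with
`ds1*/ds2 = [1/(1 − 1/(2(1−b2)(1−s2)φ2))²]·m²/(8(1−b1)(1−b2)²(1−s2)²φ2) > 0`,
so `s2 ↦ s1*(s2)` is strictly increasing: process-R&D subsidies are strategic
complements. -/
theorem foreign_subsidy_best_response_processRD
    (m b1 b2 t φ2 : ℝ)
    (hb1 : b1 ∈ Set.Ioo (0 : ℝ) 1) (hb2 : b2 ∈ Set.Ioo (0 : ℝ) 1)
    (ht : t ∈ Set.Ioo (0 : ℝ) 1) (hφ2 : 0 < φ2) (hm : m ≠ 0) :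
    (∀ s2 ∈ Set.Ioo (0 : ℝ) 1, 2 * (1 - b2) * (1 - s2) * φ2 > 1 →
      0 < s1star m b1 b2 t φ2 s2 ∧
      (∀ t' : ℝ, s1star m b1 b2 t' φ2 s2 = s1star m b1 b2 t φ2 s2) ∧
      HasDerivAt (fun σ => s1star m b1 b2 t φ2 σ)
        ((1 / (1 - 1 / (2 * (1 - b2) * (1 - s2) * φ2)) ^ 2) *
          (m ^ 2 / (8 * (1 - b1) * (1 - b2) ^ 2 * (1 - s2) ^ 2 * φ2))) s2 ∧
      0 < (1 / (1 - 1 / (2 * (1 - b2) * (1 - s2) * φ2)) ^ 2) *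
          (m ^ 2 / (8 * (1 - b1) * (1 - b2) ^ 2 * (1 - s2) ^ 2 * φ2))) ∧
    StrictMonoOn (fun σ => s1star m b1 b2 t φ2 σ)
      {s2 : ℝ | s2 ∈ Set.Ioo (0 : ℝ) 1 ∧ 2 * (1 - b2) * (1 - s2) * φ2 > 1} := by
  obtain ⟨hb10, hb11⟩ := hb1
  obtain ⟨hb20, hb21⟩ := hb2
  have h1b1 : (0:ℝ) < 1 - b1 := by linarith
  have h1b2 : (0:ℝ) < 1 - b2 := by linarith
  have hc : 0 < m ^ 2 / (4 * (1 - b1) * (1 - b2)) := by positivity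
  constructor
  · intro s2 hs2 hu
    obtain ⟨hs20, hs21⟩ := hs2
    have hs2' : (0:ℝ) < 1 - s2 := by linarith
    have hu0 : (0:ℝ) < 2 * (1 - b2) * (1 - s2) * φ2 := by linarith
    have hune : (2 * (1 - b2) * (1 - s2) * φ2) ≠ 0 := ne_of_gt hu0
    have hg : (0:ℝ) < 1 - 1 / (2 * (1 - b2) * (1 - s2) * φ2) := by
      have : 1 / (2 * (1 - b2) * (1 - s2) * φ2) < 1 := by
        rw [div_lt_one hu0]; exact hu
      linarith
    have hgne : (1 - 1 / (2 * (1 - b2) * (1 - s2) * φ2)) ≠ 0 := ne_of_gt hg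
    refine ⟨by unfold s1star; positivity, fun t' => rfl, ?_, ?_⟩
    · -- derivative
      have h2 : HasDerivAt (fun σ : ℝ => 2 * (1 - b2) * (1 - σ) * φ2)
          (2 * (1 - b2) * (-1) * φ2) s2 :=
        (((hasDerivAt_id s2).const_sub 1).const_mul (2 * (1 - b2))).mul_const φ2
      have h3 : HasDerivAt (fun σ : ℝ => 1 - 1 / (2 * (1 - b2) * (1 - σ) * φ2))
          (-(-(2 * (1 - b2) * (-1) * φ2) / (2 * (1 - b2) * (1 - s2) * φ2) ^ 2)) s2 := by
        have := (h2.inv hune).const_sub 1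
        simpa [one_div] using this
      have h4 := (hasDerivAt_const s2 (m ^ 2 / (4 * (1 - b1) * (1 - b2)))).div h3 hgne
      have heq : (0 * (1 - 1 / (2 * (1 - b2) * (1 - s2) * φ2)) -
          m ^ 2 / (4 * (1 - b1) * (1 - b2)) *
            (-(-(2 * (1 - b2) * (-1) * φ2) / (2 * (1 - b2) * (1 - s2) * φ2) ^ 2))) /
          (1 - 1 / (2 * (1 - b2) * (1 - s2) * φ2)) ^ 2 =
          (1 / (1 - 1 / (2 * (1 - b2) * (1 - s2) * φ2)) ^ 2) *
          (m ^ 2 / (8 * (1 - b1) * (1 - b2) ^ 2 * (1 - s2) ^ 2 * φ2)) := by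
        set g := 1 - 1 / (2 * (1 - b2) * (1 - s2) * φ2) with hgdef
        field_simp
        ring
      rw [heq] at h4
      exact h4.congr_of_eventuallyEq (by filter_upwards with σ; simp [s1star])
    · positivity
  · -- strict monotonicity
    intro x hx y hy hxy
    obtain ⟨⟨hx0, hx1⟩, hux⟩ := hx
    obtain ⟨⟨hy0, hy1⟩, huy⟩ := hy
    have hx' : (0:ℝ) < 1 - x := by linarith
    have hy' : (0:ℝ) < 1 - y := by linarith
    have hux0 : (0:ℝ) < 2 * (1 - b2) * (1 - x) * φ2 := by linarith
    have huy0 : (0:ℝ) < 2 * (1 - b2) * (1 - y) * φ2 := by linarith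
    have hgy : (0:ℝ) < 1 - 1 / (2 * (1 - b2) * (1 - y) * φ2) := by
      have : 1 / (2 * (1 - b2) * (1 - y) * φ2) < 1 := by rw [div_lt_one huy0]; exact huy
      linarith
    have hlt : 2 * (1 - b2) * (1 - y) * φ2 < 2 * (1 - b2) * (1 - x) * φ2 := by nlinarith
    have hgxy : 1 - 1 / (2 * (1 - b2) * (1 - y) * φ2) <
        1 - 1 / (2 * (1 - b2) * (1 - x) * φ2) := by
      have := one_div_lt_one_div_of_lt huy0 hlt
      linarith
    simp only [s1star]
    exact div_lt_div_of_pos_left hc hgy hgxy
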